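/- Let U be an n×m matrix and λ ∈ ℝ^m nonnegative with λ_j = 0 for some index j. If the columns of U are linearly dependent in a way involving only indices where λ vanishes (i.e., there is a nonzero vector v in the kernel of U supported on {j : λ_j = 0}), then the maximizer of η ↦ -(Y - Uη)ᵀ(Y - Uη) - ηᵀ diag(λ) η is not unique. -/

import Mathlib

/-! Translating η by v fixes `U *ᵥ η` since `U *ᵥ v = 0`, and fixes the penalty because
`diagonal λ` kills `v` from both sides, so the objective is `v`-periodic and every maximizer
`η` yields the distinct maximizer `η + v`. -/

open Matrix

section

variable {ι κ R : Type*} [Fintype ι] [Fintype κ] [DecidableEq ι]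

theorem diagonal_mulVec_eq_zero_of_support [NonUnitalNonAssocSemiring R] {d v : ι → R}
    (h : ∀ j, d j ≠ 0 → v j = 0) : diagonal d *ᵥ v = 0 := by
  funext j
  by_cases hj : d j = 0 <;> simp [mulVec_diagonal, hj, h j]

theorem vecMul_diagonal_eq_zero_of_support [NonUnitalNonAssocSemiring R] {d v : ι → R}
    (h : ∀ j, d j ≠ 0 → v j = 0) : v ᵥ* diagonal d = 0 := by
  funext j
  by_cases hj : d j = 0 <;> simp [vecMul_diagonal, hj, h j]

omit [DecidableEq ι] in
theorem dotProduct_mulVec_add_of_mulVec_eq_zero [NonUnitalSemiring R] {A : Matrix ι ι R}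
    {v : ι → R} (hAv : A *ᵥ v = 0) (hvA : v ᵥ* A = 0) (η : ι → R) :
    (η + v) ⬝ᵥ A *ᵥ (η + v) = η ⬝ᵥ A *ᵥ η := by
  rw [mulVec_add, hAv, add_zero, add_dotProduct, dotProduct_mulVec v, hvA, zero_dotProduct,
    add_zero]

def penalizedObjective [Ring R] (U : Matrix κ ι R) (Y : κ → R) (lam η : ι → R) : R :=
  -((Y - U *ᵥ η) ⬝ᵥ (Y - U *ᵥ η)) - η ⬝ᵥ diagonal lam *ᵥ η

theorem penalizedObjective_add_of_mulVec_eq_zero [Ring R] {U : Matrix κ ι R}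
    (Y : κ → R) {lam v : ι → R} (hker : U *ᵥ v = 0) (hsupp : ∀ j, lam j ≠ 0 → v j = 0)
    (η : ι → R) : penalizedObjective U Y lam (η + v) = penalizedObjective U Y lam η := by
  rw [penalizedObjective, penalizedObjective, mulVec_add U, hker, add_zero,
    dotProduct_mulVec_add_of_mulVec_eq_zero (diagonal_mulVec_eq_zero_of_support hsupp)
      (vecMul_diagonal_eq_zero_of_support hsupp)]

end

theorem stmt2_general (n m : ℕ) (U : Matrix (Fin n) (Fin m) ℝ) (Y : Fin n → ℝ)
    (lam : Fin m → ℝ) (v : Fin m → ℝ) (hv : v ≠ 0)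
    (hker : U.mulVec v = 0) (hsupp : ∀ j, lam j ≠ 0 → v j = 0) :
    let f : (Fin m → ℝ) → ℝ := fun η =>
      -((Y - U.mulVec η) ⬝ᵥ (Y - U.mulVec η)) - η ⬝ᵥ (Matrix.diagonal lam).mulVec η
    ∀ η, (∀ η', f η' ≤ f η) → ((∀ η', f η' ≤ f (η + v)) ∧ η + v ≠ η) := by
  intro f η hmax
  have hshift : f (η + v) = f η := penalizedObjective_add_of_mulVec_eq_zero Y hker hsupp η
  exact ⟨fun η' => hshift ▸ hmax η', add_ne_left.mpr hv⟩

theorem stmt2 (n m : ℕ) (U : Matrix (Fin n) (Fin m) ℝ) (Y : Fin n → ℝ)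
    (lam : Fin m → ℝ) (hlam : ∀ j, 0 ≤ lam j) (v : Fin m → ℝ) (hv : v ≠ 0)
    (hker : U.mulVec v = 0) (hsupp : ∀ j, lam j ≠ 0 → v j = 0) :
    let f : (Fin m → ℝ) → ℝ := fun η =>
      -((Y - U.mulVec η) ⬝ᵥ (Y - U.mulVec η)) - η ⬝ᵥ (Matrix.diagonal lam).mulVec η
    ∀ η, (∀ η', f η' ≤ f η) → ((∀ η', f η' ≤ f (η + v)) ∧ η + v ≠ η) :=
  stmt2_general n m U Y lam v hv hker hsupp
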